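/- arXiv:1508.00986 — 6 statements merged into one kernel-verified Lean document; each statement's English description precedes it below -/
import Mathlib

section
/- Let H be a map on a nonempty complete metric space of bounded functions (with the supremum metric) satisfying ‖HU₁ − HU₂‖_∞ ≤ η‖U₁ − U₂‖_∞ for all U₁, U₂, and let A be a linear operator with ‖A‖_∞ such that η‖A‖_∞ < 1. Define H̄ by (H̄U)(b) = ‖b^⊤A‖₁ · (HU)(b̂) where b̂ = b^⊤A / ‖b^⊤A‖₁. Then H̄ satisfies ‖H̄U₁ − H̄U₂‖_∞ ≤ η‖A‖_∞ ‖U₁ − U₂‖_∞, i.e., H̄ is a contraction with modulus η‖A‖_∞ < 1. -/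
open Matrix Finset

/-- Lemma 2 (contraction of the compressed Bellman backup).  If `H` is an
`η`-contraction in the supremum norm (expressed via pointwise bounds), `A` is a
matrix with `‖A‖_∞ ≤ M` (i.e. `‖bA‖₁ ≤ ‖b‖₁ * M` for all `b`) and `η * M < 1`,
then the modified backup `H̄ U b = ‖bA‖₁ * (H U)(bA / ‖bA‖₁)` satisfies
`‖H̄U₁ − H̄U₂‖_∞ ≤ η * M * ‖U₁ − U₂‖_∞` on beliefs (vectors with `‖b‖₁ = 1`). -/
theorem stmt_2 (n : ℕ) (A : Matrix (Fin n) (Fin n) ℝ) (η M : ℝ)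
    (hη : 0 ≤ η) (hM : 0 ≤ M) (hcontr : η * M < 1)
    (hA : ∀ b : Fin n → ℝ, (∑ j, |Matrix.vecMul b A j|) ≤ (∑ i, |b i|) * M)
    (H : ((Fin n → ℝ) → ℝ) → ((Fin n → ℝ) → ℝ))
    (hH : ∀ (U₁ U₂ : (Fin n → ℝ) → ℝ) (C : ℝ), 0 ≤ C →
      (∀ x, |U₁ x - U₂ x| ≤ C) → ∀ x, |H U₁ x - H U₂ x| ≤ η * C)
    (Hbar : ((Fin n → ℝ) → ℝ) → ((Fin n → ℝ) → ℝ))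
    (hHbar : ∀ (U : (Fin n → ℝ) → ℝ) (b : Fin n → ℝ),
      Hbar U b = (∑ j, |Matrix.vecMul b A j|) *
        H U (fun j => Matrix.vecMul b A j / ∑ j', |Matrix.vecMul b A j'|)) :
    ∀ (U₁ U₂ : (Fin n → ℝ) → ℝ) (C : ℝ), 0 ≤ C →
      (∀ x, |U₁ x - U₂ x| ≤ C) →
      ∀ b : Fin n → ℝ, (∑ i, |b i|) = 1 → |Hbar U₁ b - Hbar U₂ b| ≤ η * M * C := by
  intro U₁ U₂ C hC hU b hb
  set s := ∑ j, |Matrix.vecMul b A j| with hs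
  have hs0 : 0 ≤ s := Finset.sum_nonneg fun j _ => abs_nonneg _
  have hsM : s ≤ M := by have := hA b; rwa [hb, one_mul] at this
  set x : Fin n → ℝ := fun j => Matrix.vecMul b A j / s
  have key : |H U₁ x - H U₂ x| ≤ η * C := hH U₁ U₂ C hC hU x
  rw [hHbar, hHbar, ← mul_sub, abs_mul, abs_of_nonneg hs0]
  calc s * |H U₁ x - H U₂ x| ≤ M * (η * C) :=
        mul_le_mul hsM key (abs_nonneg _) hM
    _ = η * M * C := by ring
end

section
/- Let F be an n×k matrix. Then for all k-dimensional vectors α̃₁, α̃₂ and all compressed beliefs b̃^⊤ = b^⊤F with b an arbitrary probability vector (b ≥ 0, Σᵢ bᵢ = 1), the implication (α̃₁ ≥ α̃₂ entrywise ⟹ b̃^⊤α̃₁ ≥ b̃^⊤α̃₂) holds if and only if F ≥ 0 entrywise. -/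
open Matrix Finset

/-- Lemma 4: for an `n × k` matrix `F`, domination of compressed α-vectors is
respected by all compressed beliefs `b̃ᵀ = bᵀF` (for arbitrary probability
vectors `b`) if and only if `F` is entrywise nonnegative. -/
theorem stmt_4 (n k : ℕ) (F : Matrix (Fin n) (Fin k) ℝ) :
    (∀ (α₁ α₂ : Fin k → ℝ) (b : Fin n → ℝ),
        (∀ i, 0 ≤ b i) → (∑ i, b i) = 1 → (∀ j, α₂ j ≤ α₁ j) →
        Matrix.vecMul b F ⬝ᵥ α₂ ≤ Matrix.vecMul b F ⬝ᵥ α₁)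
      ↔ (∀ i j, 0 ≤ F i j) := by
  constructor
  · intro h i j
    have := h 0 (fun j' => if j' = j then (-1:ℝ) else 0)
        (fun i' => if i' = i then (1:ℝ) else 0)
        (by intro i'; split <;> norm_num)
        (by simp)
        (by intro j'; dsimp; split <;> norm_num)
    simp only [vecMul, dotProduct, Pi.zero_apply, mul_zero, Finset.sum_const_zero,
      mul_ite, mul_one, mul_zero, ite_mul, neg_mul, zero_mul,
      Finset.sum_ite_eq', Finset.mem_univ, if_true, one_mul] at this
    linarith
  · intro hF α₁ α₂ b hb hsum hα
    apply Finset.sum_le_sum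
    intro j _
    have h1 : 0 ≤ Matrix.vecMul b F j := by
      simp only [vecMul, dotProduct]
      exact Finset.sum_nonneg fun i _ => mul_nonneg (hb i) (hF i j)
    exact mul_le_mul_of_nonneg_left (hα j) h1
end

section
/- Suppose the finite-horizon value recursions V_{n+1}^π(b) = b^⊤R_{·,π(b)} + η Σ_z V_n^π(b^⊤T^{π(b),z}) and Ṽ_{n+1}^π(b̃) = b̃^⊤R̃_{·,π(b̃)} + η Σ_z Ṽ_n^π(b̃^⊤T̃^{π(b̃),z}) are defined with V_0^π(b) = b^⊤R_{·,π(b)} and Ṽ_0^π(b̃) = b̃^⊤R̃_{·,π(b̃)}, where b̃^⊤ = b^⊤F. If R = FR̃ and T^{a,z}F = FT̃^{a,z} for all actions a and observations z, then V_n^π(b) = Ṽ_n^π(b̃) for every policy π, every reachable belief b, and every n ≥ 0. -/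
open Matrix Finset

/-- Finite-horizon value recursion of a POMDP under a fixed policy `π`:
`V₀(b) = bᵀR_{·,π(b)}` and
`V_{m+1}(b) = bᵀR_{·,π(b)} + η ∑_z V_m(bᵀT^{π(b),z})`. -/
noncomputable def valueRec {n : ℕ} {𝒜 𝒵 : Type*} [Fintype 𝒵]
    (R : Matrix (Fin n) 𝒜 ℝ) (T : 𝒜 → 𝒵 → Matrix (Fin n) (Fin n) ℝ)
    (π : (Fin n → ℝ) → 𝒜) (η : ℝ) : ℕ → (Fin n → ℝ) → ℝ
  | 0, b => b ⬝ᵥ fun i => R i (π b)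
  | m + 1, b => (b ⬝ᵥ fun i => R i (π b)) +
      η * ∑ z, valueRec R T π η m (Matrix.vecMul b (T (π b) z))

/-- Theorem 1 (Poupart & Boutilier, lossless value-directed compression):
if `R = F R̃` and `T^{a,z} F = F T̃^{a,z}` for all actions `a` and observations
`z`, and the compressed policy agrees with the original one on corresponding
beliefs, then `V_n^π(b) = Ṽ_n^π(b̃)` with `b̃ᵀ = bᵀF`, for every policy,
every belief and every horizon `n ≥ 0`. -/
theorem stmt_6 {n k : ℕ} {𝒜 𝒵 : Type*} [Fintype 𝒵]
    (R : Matrix (Fin n) 𝒜 ℝ) (T : 𝒜 → 𝒵 → Matrix (Fin n) (Fin n) ℝ)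
    (Rt : Matrix (Fin k) 𝒜 ℝ) (Tt : 𝒜 → 𝒵 → Matrix (Fin k) (Fin k) ℝ)
    (F : Matrix (Fin n) (Fin k) ℝ) (η : ℝ)
    (π : (Fin n → ℝ) → 𝒜) (πt : (Fin k → ℝ) → 𝒜)
    (hπ : ∀ b : Fin n → ℝ, πt (Matrix.vecMul b F) = π b)
    (hR : R = F * Rt)
    (hT : ∀ a z, T a z * F = F * Tt a z) :
    ∀ (m : ℕ) (b : Fin n → ℝ),
      valueRec R T π η m b = valueRec Rt Tt πt η m (Matrix.vecMul b F) := by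
  have hRew : ∀ (b : Fin n → ℝ) (a : 𝒜),
      (b ⬝ᵥ fun i => R i a) = (Matrix.vecMul b F ⬝ᵥ fun j => Rt j a) := by
    intro b a
    simp only [hR, dotProduct, Matrix.vecMul, Matrix.mul_apply,
      Finset.mul_sum, Finset.sum_mul]
    rw [Finset.sum_comm]
    ring_nf
  intro m
  induction m with
  | zero =>
    intro b
    simp [valueRec, hπ, hRew]
  | succ m ih =>
    intro b
    simp only [valueRec, hπ, hRew]
    congr 2
    apply Finset.sum_congr rfl
    intro z _
    rw [ih, Matrix.vecMul_vecMul, hT, ← Matrix.vecMul_vecMul]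
end

section
/- Let A = FF^† be an n×n matrix, and define R̃ = F^†R and T̃^{a,z} = F^†T^{a,z}F. If A satisfies R = AR and T^{a,z} = AT^{a,z} for all a, z, then for every policy π, every reachable belief b (with b̃^⊤ = b^⊤F), and every horizon n, the compressed value V_n^π-tilde(b̃) equals the original value V_n^π(b). -/
open Matrix Finset

/-- Theorem 2, condition (i): let `A = F F†`, `R̃ = F† R`, `T̃^{a,z} = F† T^{a,z} F`.
If `R = A R` and `T^{a,z} = A T^{a,z}` for all `a, z`, then for every policy,
every belief `b` (with `b̃ᵀ = bᵀF`) and every horizon, the compressed value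
equals the original value. -/
theorem stmt_7 {n k : ℕ} {𝒜 𝒵 : Type*} [Fintype 𝒵]
    (R : Matrix (Fin n) 𝒜 ℝ) (T : 𝒜 → 𝒵 → Matrix (Fin n) (Fin n) ℝ)
    (F : Matrix (Fin n) (Fin k) ℝ) (Fdag : Matrix (Fin k) (Fin n) ℝ) (η : ℝ)
    (π : (Fin n → ℝ) → 𝒜) (πt : (Fin k → ℝ) → 𝒜)
    (hπ : ∀ b : Fin n → ℝ, πt (Matrix.vecMul b F) = π b)
    (hR : R = F * Fdag * R)
    (hT : ∀ a z, T a z = F * Fdag * T a z) :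
    ∀ (m : ℕ) (b : Fin n → ℝ),
      valueRec (Fdag * R) (fun a z => Fdag * T a z * F) πt η m (Matrix.vecMul b F) =
        valueRec R T π η m b := by
  have hrew : ∀ b : Fin n → ℝ, ∀ a : 𝒜,
      (Matrix.vecMul b F ⬝ᵥ fun i => (Fdag * R) i a) = (b ⬝ᵥ fun i => R i a) := by
    intro b a
    have h1 : (F *ᵥ fun j => (Fdag * R) j a) = fun i => R i a := by
      funext i
      simp only [Matrix.mulVec, dotProduct]
      rw [show (∑ j, F i j * (Fdag * R) j a) = (F * (Fdag * R)) i a from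
        (Matrix.mul_apply).symm, ← Matrix.mul_assoc, ← hR]
    rw [← Matrix.dotProduct_mulVec, h1]
  intro m
  induction m with
  | zero =>
    intro b
    simp only [valueRec, hπ, hrew]
  | succ m ih =>
    intro b
    simp only [valueRec, hπ, hrew]
    congr 1
    congr 1
    apply Finset.sum_congr rfl
    intro z _
    rw [Matrix.vecMul_vecMul, ← Matrix.mul_assoc, ← Matrix.mul_assoc, ← hT,
      ← Matrix.vecMul_vecMul, ih]
end

section
/- Let A = FF^†, R̃ = F^†R, T̃^{a,z} = F^†T^{a,z}F. If b^⊤ = b^⊤A holds for every belief b in the reachable belief set ℬ, and ℬ is closed under the maps b ↦ b^⊤T^{a,z} (up to membership of the resulting vectors in the set where b^⊤ = b^⊤A holds), then for every policy π and every b ∈ ℬ, the compressed value Ṽ_n^π(b̃) with b̃^⊤ = b^⊤F equals V_n^π(b) for every horizon n. -/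
open Matrix Finset

/-- Theorem 2, condition (ii): let `A = F F†`, `R̃ = F† R`, `T̃^{a,z} = F† T^{a,z} F`.
If `bᵀ = bᵀ A` for every `b` in the reachable belief set `ℬ`, and `ℬ` is closed
under the (unnormalized) successor maps `b ↦ bᵀ T^{a,z}`, then for every policy
and every `b ∈ ℬ`, the compressed value `Ṽ_n^π(b̃)` with `b̃ᵀ = bᵀF` equals
`V_n^π(b)` for every horizon `n`. -/
theorem stmt_8 {n k : ℕ} {𝒜 𝒵 : Type*} [Fintype 𝒵]
    (R : Matrix (Fin n) 𝒜 ℝ) (T : 𝒜 → 𝒵 → Matrix (Fin n) (Fin n) ℝ)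
    (F : Matrix (Fin n) (Fin k) ℝ) (Fdag : Matrix (Fin k) (Fin n) ℝ) (η : ℝ)
    (π : (Fin n → ℝ) → 𝒜) (πt : (Fin k → ℝ) → 𝒜)
    (hπ : ∀ b : Fin n → ℝ, πt (Matrix.vecMul b F) = π b)
    (B : Set (Fin n → ℝ))
    (hA : ∀ b ∈ B, Matrix.vecMul b (F * Fdag) = b)
    (hclosed : ∀ b ∈ B, ∀ a z, Matrix.vecMul b (T a z) ∈ B) :
    ∀ (m : ℕ), ∀ b ∈ B,
      valueRec (Fdag * R) (fun a z => Fdag * T a z * F) πt η m (Matrix.vecMul b F) =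
        valueRec R T π η m b := by
  intro m
  induction m with
  | zero =>
    intro b hb
    simp only [valueRec, hπ]
    have : Matrix.vecMul (Matrix.vecMul b F) (Fdag * R) = Matrix.vecMul b R := by
      rw [Matrix.vecMul_vecMul, ← Matrix.mul_assoc, ← Matrix.vecMul_vecMul, hA b hb]
    calc Matrix.vecMul b F ⬝ᵥ (fun i => (Fdag * R) i (π b))
        = Matrix.vecMul (Matrix.vecMul b F) (Fdag * R) (π b) := rfl
      _ = Matrix.vecMul b R (π b) := by rw [this]
      _ = b ⬝ᵥ fun i => R i (π b) := rfl
  | succ m ih =>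
    intro b hb
    simp only [valueRec, hπ]
    congr 1
    · have : Matrix.vecMul (Matrix.vecMul b F) (Fdag * R) = Matrix.vecMul b R := by
        rw [Matrix.vecMul_vecMul, ← Matrix.mul_assoc, ← Matrix.vecMul_vecMul, hA b hb]
      calc Matrix.vecMul b F ⬝ᵥ (fun i => (Fdag * R) i (π b))
          = Matrix.vecMul (Matrix.vecMul b F) (Fdag * R) (π b) := rfl
        _ = Matrix.vecMul b R (π b) := by rw [this]
        _ = b ⬝ᵥ fun i => R i (π b) := rfl
    · congr 1
      apply Finset.sum_congr rfl
      intro z _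
      have h1 : Matrix.vecMul (Matrix.vecMul b F) (Fdag * T (π b) z * F)
          = Matrix.vecMul (Matrix.vecMul b (T (π b) z)) F := by
        rw [Matrix.vecMul_vecMul, ← Matrix.mul_assoc, ← Matrix.mul_assoc,
          ← Matrix.vecMul_vecMul, ← Matrix.vecMul_vecMul, hA b hb]
      rw [h1]
      exact ih _ (hclosed b hb _ z)
end

section
/- Let g(F) = ½‖B − FF^⊤B‖²_F + (λ/2)‖FF^⊤‖²_F for B ∈ ℝ^{n×m}, F ∈ ℝ^{n×k}, λ ≥ 0. Then the gradient of g with respect to F is ∇g(F) = −2BB^⊤F + FF^⊤BB^⊤F + BB^⊤FF^⊤F + 2λFF^⊤F. -/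
/-!
Differentiate `t ↦ g(F + tE)` entrywise: by the product rule the direction `E` moves `N = FFᵀ`
by `EFᵀ + FEᵀ` and `R = B − NB` by `−(EFᵀ + FEᵀ)B`, and `½‖M‖²` moves by `tr(M Ṁᵀ)`.
Cycling the traces, `tr(X (EFᵀ + FEᵀ)ᵀ) = tr((X + Xᵀ) F Eᵀ)`, so the directional derivative is
`tr(G Eᵀ)` with `G = λ(N + Nᵀ)F − (RBᵀ + (RBᵀ)ᵀ)F`, which expands to the stated gradient;
taking `E = single i j 1` reads off its `(i, j)` entry.
-/

open Matrix Finset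

/-- The P-NMF objective `g(F) = ½‖B − F Fᵀ B‖²_F + (λ/2)‖F Fᵀ‖²_F`. -/
noncomputable def pnmfObj {n m k : ℕ} (B : Matrix (Fin n) (Fin m) ℝ) (lam : ℝ)
    (F : Matrix (Fin n) (Fin k) ℝ) : ℝ :=
  (1 / 2) * (∑ i, ∑ j, ((B - F * Fᵀ * B) i j) ^ 2) +
    (lam / 2) * (∑ i, ∑ j, ((F * Fᵀ) i j) ^ 2)

namespace Matrix

variable {l m n : Type*}

theorem trace_mul_transpose_single {R : Type*} [Semiring R] [Fintype m] [Fintype n]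
    [DecidableEq m] [DecidableEq n] (G : Matrix m n R) (i : m) (j : n) :
    trace (G * (single i j (1 : R))ᵀ) = G i j := by
  simp [transpose_single, trace_mul_single]

theorem trace_mul_transpose_symm_mul {R : Type*} [CommSemiring R] [Fintype m] [Fintype n]
    (X : Matrix m m R) (E F : Matrix m n R) :
    trace (X * (E * Fᵀ + F * Eᵀ)ᵀ) = trace ((X + Xᵀ) * F * Eᵀ) := by
  have h : trace (X * (E * Fᵀ)) = trace (Xᵀ * F * Eᵀ) := by
    rw [← trace_transpose]
    simp only [transpose_mul, transpose_transpose]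
    exact trace_mul_cycle F Eᵀ Xᵀ
  rw [transpose_add, transpose_mul, transpose_mul, transpose_transpose, transpose_transpose,
    Matrix.mul_add, trace_add, h, Matrix.add_mul, Matrix.add_mul, trace_add]
  simp only [Matrix.mul_assoc]

section Deriv

variable {x : ℝ}

theorem hasDerivAt_mul_apply [Fintype m] {A : ℝ → Matrix l m ℝ} {C : ℝ → Matrix m n ℝ}
    {A' : Matrix l m ℝ} {C' : Matrix m n ℝ}
    (hA : ∀ a b, HasDerivAt (fun t ↦ A t a b) (A' a b) x)
    (hC : ∀ a b, HasDerivAt (fun t ↦ C t a b) (C' a b) x) (a : l) (c : n) :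
    HasDerivAt (fun t ↦ (A t * C t) a c) ((A' * C x + A x * C') a c) x := by
  simp only [mul_apply, add_apply, ← sum_add_distrib]
  exact HasDerivAt.fun_sum fun b _ ↦ (hA a b).mul (hC b c)

theorem hasDerivAt_sum_sq_apply [Fintype m] [Fintype n] {M : ℝ → Matrix m n ℝ}
    {M' : Matrix m n ℝ} (hM : ∀ a b, HasDerivAt (fun t ↦ M t a b) (M' a b) x) :
    HasDerivAt (fun t ↦ ∑ a, ∑ b, M t a b ^ 2) (2 * trace (M x * M'ᵀ)) x := by
  refine (HasDerivAt.fun_sum fun a (_ : a ∈ univ) ↦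
    HasDerivAt.fun_sum fun b (_ : b ∈ univ) ↦ (hM a b).fun_pow 2).congr_deriv ?_
  simp only [trace, diag, mul_apply, transpose_apply, mul_sum]
  refine sum_congr rfl fun a _ ↦ sum_congr rfl fun b _ ↦ ?_
  ring

end Deriv

end Matrix

noncomputable def pnmfGrad {n m k : ℕ} (B : Matrix (Fin n) (Fin m) ℝ) (lam : ℝ)
    (F : Matrix (Fin n) (Fin k) ℝ) : Matrix (Fin n) (Fin k) ℝ :=
  (-2 : ℝ) • (B * Bᵀ * F) + F * Fᵀ * B * Bᵀ * F + B * Bᵀ * F * Fᵀ * F + (2 * lam) • (F * Fᵀ * F)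

section

variable {n m k : ℕ} (B : Matrix (Fin n) (Fin m) ℝ) (lam : ℝ) (F E : Matrix (Fin n) (Fin k) ℝ)

theorem trace_pnmfGrad_mul_transpose :
    trace (pnmfGrad B lam F * Eᵀ) = lam * trace (F * Fᵀ * (E * Fᵀ + F * Eᵀ)ᵀ) -
      trace ((B - F * Fᵀ * B) * ((E * Fᵀ + F * Eᵀ) * B)ᵀ) := by
  have hgrad : pnmfGrad B lam F = lam • ((F * Fᵀ + (F * Fᵀ)ᵀ) * F) -
      ((B - F * Fᵀ * B) * Bᵀ + ((B - F * Fᵀ * B) * Bᵀ)ᵀ) * F := by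
    simp only [pnmfGrad, transpose_mul, transpose_sub, transpose_transpose, Matrix.sub_mul,
      Matrix.add_mul, Matrix.mul_assoc]
    module
  rw [transpose_mul, ← Matrix.mul_assoc, trace_mul_transpose_symm_mul,
    trace_mul_transpose_symm_mul, hgrad]
  simp only [Matrix.sub_mul, Matrix.add_mul, Matrix.smul_mul, trace_sub, trace_add, trace_smul,
    smul_eq_mul]

theorem hasDerivAt_pnmfObj_add_smul :
    HasDerivAt (fun t : ℝ ↦ pnmfObj B lam (F + t • E)) (trace (pnmfGrad B lam F * Eᵀ)) 0 := by
  set L : ℝ → Matrix (Fin n) (Fin k) ℝ := fun t ↦ F + t • E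
  have hL₀ : L 0 = F := by simp [L]
  have hL : ∀ a b, HasDerivAt (fun t ↦ L t a b) (E a b) 0 := fun a b ↦ by
    simpa [L] using ((hasDerivAt_id (0 : ℝ)).mul_const (E a b)).const_add (F a b)
  have hN := hasDerivAt_mul_apply hL (C := fun t ↦ (L t)ᵀ) (C' := Eᵀ) fun a b ↦ hL b a
  rw [hL₀] at hN
  have hR : ∀ a b, HasDerivAt (fun t ↦ (B - L t * (L t)ᵀ * B) a b)
      ((-((E * Fᵀ + F * Eᵀ) * B)) a b) 0 := fun a b ↦ by
    simpa using (hasDerivAt_mul_apply hN (C := fun _ ↦ B) (C' := 0)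
      (fun _ _ ↦ hasDerivAt_const _ _) a b).const_sub (B a b)
  have h := ((hasDerivAt_sum_sq_apply hR).const_mul (1 / 2)).add
    ((hasDerivAt_sum_sq_apply hN).const_mul (lam / 2))
  simp only [hL₀] at h
  refine h.congr_deriv ?_
  rw [trace_pnmfGrad_mul_transpose, transpose_neg, Matrix.mul_neg, trace_neg]
  ring

end

/-- Gradient of the P-NMF objective: the partial derivative of `g` with respect
to the `(i,j)` entry of `F` is the `(i,j)` entry of
`−2BBᵀF + FFᵀBBᵀF + BBᵀFFᵀF + 2λFFᵀF`. -/
theorem stmt_16 {n m k : ℕ} (B : Matrix (Fin n) (Fin m) ℝ) (lam : ℝ)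
    (F : Matrix (Fin n) (Fin k) ℝ) :
    ∀ (i : Fin n) (j : Fin k),
      HasDerivAt (fun t : ℝ => pnmfObj B lam (F + t • Matrix.single i j 1))
        (((-2 : ℝ) • (B * Bᵀ * F) + F * Fᵀ * B * Bᵀ * F + B * Bᵀ * F * Fᵀ * F +
          (2 * lam) • (F * Fᵀ * F)) i j) 0 := by
  intro i j
  have h := hasDerivAt_pnmfObj_add_smul B lam F (single i j 1)
  rwa [trace_mul_transpose_single] at h
end
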